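/- For 0 < δ < 1, the equation tan(α) = α/(1−δ) has a unique solution α_M in the interval (0, π/2), and α_M → 0 as δ → 0 with the asymptotic α_M² = 3δ + O(δ²); in particular α_M ≈ √(3δ) for small δ. -/

import Mathlib

/-!
On `[0, π/2)` the tangent is strictly convex (its derivative `1 + tan² x` increases) and vanishes
at `0`, so the secant slope `tan x / x` is strictly increasing; it runs from `1` at `0⁺` to `∞` at
`π/2⁻`, hence takes the value `1 / (1 - δ)` exactly once. Plugging the Taylor bounds
`x + x³/3 ≤ tan x ≤ x + x³/3 + x⁵` into `tan α = α / (1 - δ)` gives `α² (1 - δ) ≤ 3δ` and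
`3δ ≤ α² + 3α⁴`, so `α² - 3δ = O(δ²)`, which in turn forces `α → 0`.
-/

open Real Filter Asymptotics

open Set Topology

namespace Real

lemma strictConvexOn_tan : StrictConvexOn ℝ (Ico 0 (π / 2)) tan := by
  refine StrictMonoOn.strictConvexOn_of_deriv (convex_Ico 0 (π / 2))
    (continuousOn_tan_Ioo.mono fun x hx => ⟨by linarith [pi_pos, hx.1], hx.2⟩) ?_
  rw [interior_Ico]
  intro x hx y hy hxy
  have hcy : 0 < cos y := cos_pos_of_mem_Ioo ⟨by linarith [pi_pos, hy.1], hy.2⟩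
  have hcos : cos y < cos x :=
    strictAntiOn_cos ⟨hx.1.le, by linarith [pi_pos, hx.2]⟩ ⟨hy.1.le, by linarith [pi_pos, hy.2]⟩ hxy
  simp only [deriv_tan]
  gcongr

lemma strictMonoOn_tan_div_self : StrictMonoOn (fun x => tan x / x) (Ioo 0 (π / 2)) := by
  intro x hx y hy hxy
  simpa using strictConvexOn_tan.secant_strict_mono (a := 0) ⟨le_rfl, by positivity⟩
    (Ioo_subset_Ico_self hx) (Ioo_subset_Ico_self hy) hx.1.ne' hy.1.ne' hxy

lemma tendsto_tan_div_self_nhdsGT_zero : Tendsto (fun x => tan x / x) (𝓝[>] 0) (𝓝 1) := by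
  have := (hasDerivAt_tan (x := 0) (by simp)).tendsto_slope_zero_right
  simpa [div_eq_inv_mul] using this

lemma tendsto_tan_div_self_nhdsLT_pi_div_two :
    Tendsto (fun x => tan x / x) (𝓝[<] (π / 2)) atTop := by
  have hinv : Tendsto (fun x : ℝ => x⁻¹) (𝓝[<] (π / 2)) (𝓝 (π / 2)⁻¹) :=
    (tendsto_inv₀ (by positivity)).mono_left nhdsWithin_le_nhds
  exact tendsto_tan_pi_div_two.atTop_mul_pos (by positivity) hinv

lemma existsUnique_tan_eq_mul {c : ℝ} (hc : 1 < c) :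
    ∃! x, x ∈ Ioo 0 (π / 2) ∧ tan x = c * x := by
  have hslope : ∀ x ∈ Ioo 0 (π / 2), tan x = c * x ↔ tan x / x = c := fun x hx =>
    (div_eq_iff hx.1.ne').symm
  obtain ⟨x, hx, hxc⟩ : c ∈ (fun x => tan x / x) '' Ioo 0 (π / 2) :=
    isPreconnected_Ioo.intermediate_value_Ioi (l₁ := 𝓝[>] 0) (l₂ := 𝓝[<] (π / 2))
      (le_principal_iff.2 (Ioo_mem_nhdsGT pi_div_two_pos))
      (le_principal_iff.2 (Ioo_mem_nhdsLT pi_div_two_pos))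
      ((continuousOn_tan_Ioo.mono (Ioo_subset_Ioo_left (by linarith [pi_pos]))).div
        continuousOn_id fun y hy => hy.1.ne')
      tendsto_tan_div_self_nhdsGT_zero tendsto_tan_div_self_nhdsLT_pi_div_two hc
  refine ⟨x, ⟨hx, (hslope x hx).2 hxc⟩, fun y ⟨hy, hyc⟩ => ?_⟩
  exact strictMonoOn_tan_div_self.injOn hy hx (((hslope y hy).1 hyc).trans hxc.symm)

lemma add_pow_three_div_three_le_tan {x : ℝ} (h0 : 0 ≤ x) (h1 : x < π / 2) :
    x + x ^ 3 / 3 ≤ tan x := by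
  have hcos : ∀ y ∈ Ico 0 (π / 2), cos y ≠ 0 := fun y hy =>
    (cos_pos_of_mem_Ioo ⟨by linarith [pi_pos, hy.1], hy.2⟩).ne'
  have hderiv : ∀ y ∈ Ico 0 (π / 2),
      HasDerivAt (fun y => tan y - (y + y ^ 3 / 3)) (tan y ^ 2 - y ^ 2) y := by
    intro y hy
    refine ((hasDerivAt_tan (hcos y hy)).sub ((hasDerivAt_id y).add
      ((hasDerivAt_pow 3 y).div_const 3))).congr_deriv ?_
    rw [← inv_one_add_tan_sq (hcos y hy), one_div, inv_inv]
    push_cast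
    ring
  have hmono : MonotoneOn (fun y => tan y - (y + y ^ 3 / 3)) (Ico 0 (π / 2)) := by
    refine monotoneOn_of_hasDerivWithinAt_nonneg (convex_Ico 0 (π / 2))
      (fun y hy => (hderiv y hy).continuousAt.continuousWithinAt)
      (fun y hy => (hderiv y (interior_subset hy)).hasDerivWithinAt) fun y hy => ?_
    rw [interior_Ico] at hy
    have := le_tan hy.1.le hy.2
    nlinarith [hy.1]
  simpa using hmono ⟨le_rfl, pi_div_two_pos⟩ ⟨h0, h1⟩ h0

lemma tan_le_add_pow_three_div_three_add_pow_five {x : ℝ} (h0 : 0 ≤ x) (h1 : x ≤ 1) :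
    tan x ≤ x + x ^ 3 / 3 + x ^ 5 := by
  have hsin : sin x ≤ x - x ^ 3 / 6 + x ^ 5 / 100 := by
    have := (abs_le.1 (sin_bound (abs_le.2 ⟨by linarith, h1⟩))).2
    rw [abs_of_nonneg h0] at this
    linarith
  have hcos : 1 - x ^ 2 / 2 ≤ cos x := one_sub_sq_div_two_le_cos
  have hcos_pos : 0 < 1 - x ^ 2 / 2 := by nlinarith
  rw [tan_eq_sin_div_cos, div_le_iff₀ (hcos_pos.trans_le hcos)]
  calc sin x ≤ x - x ^ 3 / 6 + x ^ 5 / 100 := hsin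
    _ ≤ (x + x ^ 3 / 3 + x ^ 5) * (1 - x ^ 2 / 2) := by
      nlinarith [pow_nonneg h0 5, pow_le_one₀ h0 h1 (n := 2)]
    _ ≤ (x + x ^ 3 / 3 + x ^ 5) * cos x := by gcongr

end Real

section Minnaert

variable {δ α : ℝ}

lemma sq_mul_one_sub_le_of_tan_eq (hδ : δ < 1) (hα : α ∈ Ioo 0 (π / 2))
    (h : tan α = α / (1 - δ)) : α ^ 2 * (1 - δ) ≤ 3 * δ := by
  have hlow := add_pow_three_div_three_le_tan hα.1.le hα.2
  rw [h, le_div_iff₀ (sub_pos.2 hδ)] at hlow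
  nlinarith [hα.1]

lemma three_mul_le_sq_add_of_tan_eq (hδ : δ < 1) (hα0 : 0 < α) (hα1 : α ≤ 1)
    (h : tan α = α / (1 - δ)) : 3 * δ ≤ α ^ 2 + 3 * α ^ 4 := by
  have hup := tan_le_add_pow_three_div_three_add_pow_five hα0.le hα1
  rw [h, div_le_iff₀ (sub_pos.2 hδ)] at hup
  have hu : δ * (1 + α ^ 2 / 3 + α ^ 4) ≤ α ^ 2 / 3 + α ^ 4 := by nlinarith
  rcases le_or_gt 0 δ with hδ0 | hδ0
  · nlinarith [mul_nonneg hδ0 (add_nonneg (sq_nonneg α) (pow_nonneg hα0.le 4))]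
  · nlinarith [sq_nonneg α, pow_nonneg hα0.le 4]

/-- From `α² (1 - δ) ≤ 3δ` and `δ ≤ 1/6` we get `α² ≤ 18δ/5`, so `3α⁴ ≤ 3 (18/5)² δ² < 39 δ²`. -/
lemma abs_sq_sub_three_mul_le_of_tan_eq (hδ : δ ≤ 1 / 6) (hα : α ∈ Ioo 0 (π / 2))
    (h : tan α = α / (1 - δ)) : |α ^ 2 - 3 * δ| ≤ 39 * δ ^ 2 := by
  have hupper := sq_mul_one_sub_le_of_tan_eq (by linarith) hα h
  have hδ0 : 0 ≤ δ := by nlinarith [hα.1]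
  have hsq : α ^ 2 ≤ 18 / 5 * δ := by nlinarith
  have hlower := three_mul_le_sq_add_of_tan_eq (by linarith) hα.1 (by nlinarith [hα.1]) h
  have hfourth : α ^ 4 ≤ (18 / 5 * δ) ^ 2 := by nlinarith [sq_nonneg α]
  rw [abs_le]
  constructor <;> nlinarith

end Minnaert

theorem stmt13 :
    (∀ δ : ℝ, δ ∈ Set.Ioo (0:ℝ) 1 →
      ∃! α : ℝ, α ∈ Set.Ioo 0 (π / 2) ∧ Real.tan α = α / (1 - δ)) ∧
    ∀ αM : ℝ → ℝ,
      (∀ δ : ℝ, δ ∈ Set.Ioo (0:ℝ) 1 →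
        αM δ ∈ Set.Ioo 0 (π / 2) ∧ Real.tan (αM δ) = αM δ / (1 - δ)) →
      (Tendsto αM (nhdsWithin 0 (Set.Ioi 0)) (nhds 0) ∧
        (fun δ => (αM δ) ^ 2 - 3 * δ) =O[nhdsWithin 0 (Set.Ioi 0)] fun δ => δ ^ 2) := by
  refine ⟨fun δ hδ => ?_, fun αM hαM => ?_⟩
  · have hc : 1 < (1 - δ)⁻¹ := one_lt_inv₀ (by linarith [hδ.2]) |>.2 (by linarith [hδ.1])
    simpa only [div_eq_inv_mul] using existsUnique_tan_eq_mul hc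
  have hO : (fun δ => αM δ ^ 2 - 3 * δ) =O[𝓝[>] 0] fun δ => δ ^ 2 := by
    refine IsBigO.of_bound 39 ?_
    filter_upwards [Ioo_mem_nhdsGT (show (0 : ℝ) < 1 / 6 by norm_num)] with δ hδ
    obtain ⟨hα, h⟩ := hαM δ ⟨hδ.1, by linarith [hδ.2]⟩
    simpa using abs_sq_sub_three_mul_le_of_tan_eq hδ.2.le hα h
  refine ⟨?_, hO⟩
  have hid : Tendsto (fun δ : ℝ => δ) (𝓝[>] 0) (𝓝 0) := nhdsWithin_le_nhds
  have hsq : Tendsto (fun δ => αM δ ^ 2) (𝓝[>] 0) (𝓝 0) := by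
    have hδsq : Tendsto (fun δ : ℝ => δ ^ 2) (𝓝[>] 0) (𝓝 0) := by simpa using hid.pow 2
    have hδ3 : Tendsto (fun δ : ℝ => 3 * δ) (𝓝[>] 0) (𝓝 0) := by simpa using hid.const_mul 3
    simpa using (hO.trans_tendsto hδsq).add hδ3
  have hpos : ∀ᶠ δ in 𝓝[>] 0, 0 < αM δ := by
    filter_upwards [Ioo_mem_nhdsGT zero_lt_one] with δ hδ using (hαM δ hδ).1.1
  simpa using ((continuous_sqrt.tendsto 0).comp hsq).congr'
    (hpos.mono fun δ hδ => sqrt_sq hδ.le)
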